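/- arXiv:2410.01938 — 4 statements merged into one kernel-verified Lean document; each statement's English description precedes it below -/
import Mathlib

section
/- Let K be a field and A an algebra over K (a K-vector space with a bilinear product, of arbitrary dimension, with no identities assumed on the product). Then A is semisimple if and only if Ann(A) = 0 and A admits a semi-division linear basis. -/
/-!  Nonassociative algebras as vector spaces with a bilinear product. -/

variable {K V : Type*} [Field K] [AddCommGroup V] [Module K V]

/-- `I` is a (two-sided) ideal of the algebra `(V, mul)`. -/
def IsIdeal (mul : V →ₗ[K] V →ₗ[K] V) (I : Submodule K V) : Prop :=
  ∀ a : V, ∀ x ∈ I, mul a x ∈ I ∧ mul x a ∈ I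

/-- The ideal of `(V, mul)` generated by an element `c`. -/
def idealGen (mul : V →ₗ[K] V →ₗ[K] V) (c : V) : Submodule K V :=
  sInf {I : Submodule K V | IsIdeal mul I ∧ c ∈ I}

/-- The annihilator `{x : x·A = A·x = 0}` of `(V, mul)` is zero. -/
def HasZeroAnn (mul : V →ₗ[K] V →ₗ[K] V) : Prop :=
  ∀ x : V, (∀ a : V, mul x a = 0 ∧ mul a x = 0) → x = 0

/-- `(V, mul)` is a simple algebra: nonzero product, only trivial ideals. -/
def IsSimpleAlgebra (mul : V →ₗ[K] V →ₗ[K] V) : Prop :=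
  mul ≠ 0 ∧ ∀ I : Submodule K V, IsIdeal mul I → I = ⊥ ∨ I = ⊤

/-- `I` is an ideal of `(V, mul)` which is simple as an algebra (with the
restricted product): nonzero product, and its only ideals are `0` and `I`. -/
def IsSimpleIdeal (mul : V →ₗ[K] V →ₗ[K] V) (I : Submodule K V) : Prop :=
  IsIdeal mul I ∧ (∃ x ∈ I, ∃ y ∈ I, mul x y ≠ 0) ∧
    ∀ J : Submodule K V, J ≤ I →
      (∀ a ∈ I, ∀ x ∈ J, mul a x ∈ J ∧ mul x a ∈ J) → J = ⊥ ∨ J = I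

/-- `(V, mul)` is semisimple: it is the direct sum of a family of ideals,
each of which is simple as an algebra. -/
def IsSemisimple (mul : V →ₗ[K] V →ₗ[K] V) : Prop :=
  ∃ 𝒮 : Set (Submodule K V), (∀ I ∈ 𝒮, IsSimpleIdeal mul I) ∧
    sSupIndep 𝒮 ∧ sSup 𝒮 = ⊤

variable {ι : Type*}

/-- The set `S_{e_i}` attached to a basis element `e_i = b i`. -/
def Sset (mul : V →ₗ[K] V →ₗ[K] V) (b : Module.Basis ι K V) (i : ι) : Set V :=
  {v | ∃ j : ι, v = b j ∧ (mul (b i) (b j) ≠ 0 ∨ mul (b j) (b i) ≠ 0)}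

/-- `B` is an i-division basis. -/
def IsIDivisionBasis (mul : V →ₗ[K] V →ₗ[K] V) (b : Module.Basis ι K V) : Prop :=
  ∀ (i : ι) (x : V),
    (mul (b i) x ≠ 0 →
      b i ∈ idealGen mul (mul (b i) x) ∧ x ∈ idealGen mul (mul (b i) x)) ∧
    (mul x (b i) ≠ 0 →
      b i ∈ idealGen mul (mul x (b i)) ∧ x ∈ idealGen mul (mul x (b i)))

/-- `B` is a weak-division basis: the i-division condition is only required
for `x` in `M_{e_i}`, the span of `S_{e_i}`. -/
def IsWeakDivisionBasis (mul : V →ₗ[K] V →ₗ[K] V) (b : Module.Basis ι K V) : Prop :=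
  ∀ i : ι, ∀ x ∈ Submodule.span K (Sset mul b i),
    (mul (b i) x ≠ 0 →
      b i ∈ idealGen mul (mul (b i) x) ∧ x ∈ idealGen mul (mul (b i) x)) ∧
    (mul x (b i) ≠ 0 →
      b i ∈ idealGen mul (mul x (b i)) ∧ x ∈ idealGen mul (mul x (b i)))

/-- The set `P_{e_i}` attached to a basis element `e_i = b i`, where
`b.coord i` is the coordinate functional `p_{e_i}`. -/
def Pset (mul : V →ₗ[K] V →ₗ[K] V) (b : Module.Basis ι K V) (i : ι) : Set V :=
  {v | ∃ j : ι, v = b j ∧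
    ((∃ r : ι, b.coord i (mul (b j) (b r)) ≠ 0) ∨
     (∃ s : ι, b.coord i (mul (b s) (b j)) ≠ 0))}

/-- The set `P_{e_i}·P_{e_i}` of products of pairs of elements of `P_{e_i}`. -/
def PPset (mul : V →ₗ[K] V →ₗ[K] V) (b : Module.Basis ι K V) (i : ι) : Set V :=
  {v | ∃ x ∈ Pset mul b i, ∃ y ∈ Pset mul b i, v = mul x y}

/-- `B` is a semi-division basis. -/
def IsSemiDivisionBasis (mul : V →ₗ[K] V →ₗ[K] V) (b : Module.Basis ι K V) : Prop :=
  IsWeakDivisionBasis mul b ∧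
  ∀ i : ι, ∀ x ∈ PPset mul b i, ∀ e ∈ Sset mul b i,
    (mul x e ≠ 0 →
      e ∈ idealGen mul (mul x e) ∧ x ∈ idealGen mul (mul x e)) ∧
    (mul e x ≠ 0 →
      e ∈ idealGen mul (mul e x) ∧ x ∈ idealGen mul (mul e x))

/-!
If `A` is a direct sum of simple ideals, glue bases of the summands: every product and every
coordinate that the division conditions look at stays inside a single summand, and a nonzero
element of a simple ideal generates it.

Conversely, with zero annihilator the weak-division property forces every ideal to be spanned by
the basis vectors it contains, and the semi-division property shows that each basis component of a
product `e_k e_j` generates the same ideal as the product. So the ideal `I(e_m)` is spanned by the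
class of basis vectors `e_n` with `I(e_n) = I(e_m)`; these ideals are simple, independent, and
span `A`.
-/

open Module

namespace Module.Basis

variable (b : Basis ι K V)

theorem mem_of_forall_mem_support {Q : Submodule K V} {z : V}
    (h : ∀ n ∈ (b.repr z).support, b n ∈ Q) : z ∈ Q :=
  Submodule.span_le.2 (by rintro _ ⟨n, hn, rfl⟩; exact hn) (b.mem_span_image.2 h)

theorem exists_add_support_filter (z : V) (p : ι → Prop) [DecidablePred p] :
    ∃ x y, z = x + y ∧
      (∀ n, n ∈ (b.repr x).support ↔ n ∈ (b.repr z).support ∧ p n) ∧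
      ∀ n, n ∈ (b.repr y).support ↔ n ∈ (b.repr z).support ∧ ¬ p n :=
  ⟨b.repr.symm ((b.repr z).filter p), b.repr.symm ((b.repr z).filter (¬ p ·)),
    by rw [← map_add, Finsupp.filter_add_filter_not, LinearEquiv.symm_apply_apply],
    fun n => by rw [b.repr.apply_symm_apply, Finsupp.support_filter, Finset.mem_filter],
    fun n => by rw [b.repr.apply_symm_apply, Finsupp.support_filter, Finset.mem_filter]⟩

end Module.Basis

section General

variable (mul : V →ₗ[K] V →ₗ[K] V)

theorem isIdeal_idealGen (c : V) : IsIdeal mul (idealGen mul c) :=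
  fun a x hx => by
    simp only [idealGen, Submodule.mem_sInf] at hx ⊢
    exact ⟨fun I hI => (hI.1 a x (hx I hI)).1, fun I hI => (hI.1 a x (hx I hI)).2⟩

theorem mem_idealGen_self (c : V) : c ∈ idealGen mul c :=
  Submodule.mem_sInf.2 fun _ hI => hI.2

variable {mul}

theorem idealGen_le {I : Submodule K V} {c : V} (hI : IsIdeal mul I) (hc : c ∈ I) :
    idealGen mul c ≤ I :=
  sInf_le ⟨hI, hc⟩

theorem idealGen_eq_of_mem_of_mem {c d : V} (hc : c ∈ idealGen mul d)
    (hd : d ∈ idealGen mul c) : idealGen mul c = idealGen mul d :=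
  le_antisymm (idealGen_le (isIdeal_idealGen mul d) hc) (idealGen_le (isIdeal_idealGen mul c) hd)

theorem mul_eq_zero_of_disjoint {I J : Submodule K V} (hI : IsIdeal mul I) (hJ : IsIdeal mul J)
    (hIJ : Disjoint I J) {x y : V} (hx : x ∈ I) (hy : y ∈ J) : mul x y = 0 :=
  Submodule.disjoint_def.1 hIJ _ (hI y x hx).2 (hJ x y hy).1

theorem isIdeal_span_of_basis (b : Basis ι K V) (s : Set V)
    (h : ∀ k, ∀ x ∈ s,
      mul (b k) x ∈ Submodule.span K s ∧ mul x (b k) ∈ Submodule.span K s) :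
    IsIdeal mul (Submodule.span K s) := by
  have hleft : Submodule.map₂ mul (Submodule.span K (Set.range b)) (Submodule.span K s) ≤
      Submodule.span K s := by
    rw [Submodule.map₂_span_span, Submodule.span_le]
    rintro _ ⟨_, ⟨k, rfl⟩, x, hx, rfl⟩
    exact (h k x hx).1
  have hright : Submodule.map₂ mul (Submodule.span K s) (Submodule.span K (Set.range b)) ≤
      Submodule.span K s := by
    rw [Submodule.map₂_span_span, Submodule.span_le]
    rintro _ ⟨x, hx, _, ⟨k, rfl⟩, rfl⟩
    exact (h k x hx).2
  intro a x hx
  have ha : a ∈ Submodule.span K (Set.range b) := b.span_eq ▸ Submodule.mem_top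
  exact ⟨hleft (Submodule.apply_mem_map₂ _ ha hx),
    hright (Submodule.apply_mem_map₂ _ hx ha)⟩

theorem exists_mem_support_of_mul_ne_zero (b : Basis ι K V) {y w : V}
    (h : mul y w ≠ 0 ∨ mul w y ≠ 0) :
    ∃ n ∈ (b.repr y).support, mul (b n) w ≠ 0 ∨ mul w (b n) ≠ 0 := by
  by_contra! hzero
  have hy := b.linearCombination_repr y
  rw [Finsupp.linearCombination_apply, Finsupp.sum] at hy
  rw [← hy] at h
  simp only [map_sum, map_smul, LinearMap.sum_apply, LinearMap.smul_apply] at h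
  rcases h with h | h <;> refine h (Finset.sum_eq_zero fun n hn => ?_)
  · rw [(hzero n hn).1, smul_zero]
  · rw [(hzero n hn).2, smul_zero]

theorem HasZeroAnn.exists_basis_mul_ne_zero (hann : HasZeroAnn mul) (b : Basis ι K V) {z : V}
    (hz : z ≠ 0) : ∃ r, mul z (b r) ≠ 0 ∨ mul (b r) z ≠ 0 := by
  have : ∃ a, mul a z ≠ 0 ∨ mul z a ≠ 0 := by
    by_contra! h
    exact hz (hann z fun a => ⟨(h a).2, (h a).1⟩)
  obtain ⟨a, ha⟩ := this
  obtain ⟨r, -, hr⟩ := exists_mem_support_of_mul_ne_zero b ha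
  exact ⟨r, hr.symm⟩

theorem exists_mem_span_Sset_mul_eq (b : Basis ι K V) (r : ι) (z : V) :
    ∃ x ∈ Submodule.span K (Sset mul b r),
      mul x (b r) = mul z (b r) ∧ mul (b r) x = mul (b r) z := by
  classical
  obtain ⟨x, y, rfl, hx, hy⟩ := b.exists_add_support_filter z (fun n => b n ∈ Sset mul b r)
  refine ⟨x, b.mem_of_forall_mem_support fun n hn => Submodule.subset_span ((hx n).1 hn).2, ?_⟩
  have hy0 : mul y (b r) = 0 ∧ mul (b r) y = 0 := by
    by_contra h
    obtain ⟨n, hn, hnr⟩ := exists_mem_support_of_mul_ne_zero b (not_and_or.1 h)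
    exact ((hy n).1 hn).2 ⟨n, rfl, hnr.symm⟩
  simp [hy0]

end General

section Forward

variable {mul : V →ₗ[K] V →ₗ[K] V}

theorem IsSimpleIdeal.eq_zero_of_forall_mul_eq_zero {I : Submodule K V}
    (hI : IsSimpleIdeal mul I) {x : V} (hx : x ∈ I)
    (h : ∀ a ∈ I, mul a x = 0 ∧ mul x a = 0) : x = 0 := by
  obtain ⟨-, ⟨u, hu, v, hv, huv⟩, hmin⟩ := hI
  have hstable : ∀ a ∈ I, ∀ y ∈ K ∙ x, mul a y ∈ K ∙ x ∧ mul y a ∈ K ∙ x := by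
    intro a ha y hy
    obtain ⟨c, rfl⟩ := Submodule.mem_span_singleton.1 hy
    simp [(h a ha).1, (h a ha).2]
  rcases hmin _ ((Submodule.span_singleton_le_iff_mem _ _).2 hx) hstable with hbot | htop
  · exact Submodule.span_singleton_eq_bot.1 hbot
  · rw [← htop] at hu hv
    obtain ⟨c, rfl⟩ := Submodule.mem_span_singleton.1 hu
    obtain ⟨d, rfl⟩ := Submodule.mem_span_singleton.1 hv
    simp [(h x hx).1] at huv

theorem IsSimpleIdeal.idealGen_eq {I : Submodule K V} (hI : IsSimpleIdeal mul I) {c : V}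
    (hc : c ∈ I) (hc0 : c ≠ 0) : idealGen mul c = I := by
  refine (hI.2.2 _ (idealGen_le hI.1 hc) fun a _ x hx => isIdeal_idealGen mul c a x hx).resolve_left
    fun h => hc0 ?_
  simpa [h] using mem_idealGen_self mul c

theorem IsSimpleIdeal.mem_idealGen_mul {I : Submodule K V} (hI : IsSimpleIdeal mul I) {x y : V}
    (hx : x ∈ I) (hy : y ∈ I) (h : mul x y ≠ 0) :
    x ∈ idealGen mul (mul x y) ∧ y ∈ idealGen mul (mul x y) := by
  rw [hI.idealGen_eq (hI.1 x y hy).1 h]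
  exact ⟨hx, hy⟩

theorem IsSemisimple.hasZeroAnn (h : IsSemisimple mul) : HasZeroAnn mul := by
  obtain ⟨𝒮, hsimp, hind, htop⟩ := h
  intro x hx
  have hx𝒮 : x ∈ ⨆ I : 𝒮, (I : Submodule K V) := by
    rw [← sSup_eq_iSup', htop]; exact Submodule.mem_top
  obtain ⟨f, hf, rfl⟩ := (Submodule.mem_iSup_iff_exists_finsupp _ _).1 hx𝒮
  have hcomp : ∀ I : 𝒮, ∀ g : V →ₗ[K] V, (∀ J : 𝒮, J ≠ I → g (f J) = 0) →
      g (f.sum fun _ v => v) = g (f I) := fun I g hg => by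
    rw [map_finsuppSum]
    exact Finsupp.sum_eq_single I (fun J _ hJ => hg J hJ) fun _ => map_zero g
  -- `I` kills the other components of `x`, hence also `f I`, which is then `0` by simplicity
  have hzero : ∀ I : 𝒮, f I = 0 := by
    intro I
    refine (hsimp I I.2).eq_zero_of_forall_mul_eq_zero (hf I) fun a ha => ?_
    have hdisj : ∀ J : 𝒮, J ≠ I → Disjoint (I : Submodule K V) J := fun J hJ =>
      hind.pairwiseDisjoint I.2 J.2 fun h => hJ (Subtype.ext h.symm)
    constructor
    · rw [← hcomp I (mul a) fun J hJ => mul_eq_zero_of_disjoint (hsimp I I.2).1 (hsimp J J.2).1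
        (hdisj J hJ) ha (hf J)]
      exact (hx a).2
    · rw [← LinearMap.flip_apply (m := f I), ← hcomp I (mul.flip a) fun J hJ =>
        mul_eq_zero_of_disjoint (hsimp J J.2).1 (hsimp I I.2).1 (hdisj J hJ).symm (hf J) ha]
      exact (hx a).1
  rw [show f = 0 from Finsupp.ext hzero, Finsupp.sum_zero_index]

theorem isSemiDivisionBasis_of_isSimpleIdeal (b : Basis ι K V) (I : ι → Submodule K V)
    (hsimp : ∀ i, IsSimpleIdeal mul (I i)) (hdisj : ∀ i j, I i ≠ I j → Disjoint (I i) (I j))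
    (hb : ∀ i, b i ∈ I i) (hcoord : ∀ i j, I j ≠ I i → ∀ x ∈ I j, b.coord i x = 0) :
    IsSemiDivisionBasis mul b := by
  have hS : ∀ i, Sset mul b i ⊆ I i := by
    rintro i _ ⟨j, rfl, hij⟩
    by_contra hj
    have hne : I i ≠ I j := fun h => hj (h ▸ hb j)
    rcases hij with h | h
    · exact h (mul_eq_zero_of_disjoint (hsimp i).1 (hsimp j).1 (hdisj i j hne) (hb i) (hb j))
    · exact h (mul_eq_zero_of_disjoint (hsimp j).1 (hsimp i).1 (hdisj j i hne.symm) (hb j) (hb i))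
  have hP : ∀ i, Pset mul b i ⊆ I i := by
    rintro i _ ⟨j, rfl, hj⟩
    by_contra hji
    have hne : I j ≠ I i := fun h => hji (h ▸ hb j)
    rcases hj with ⟨r, hr⟩ | ⟨s, hs⟩
    · exact hr (hcoord i j hne _ ((hsimp j).1 _ _ (hb j)).2)
    · exact hs (hcoord i j hne _ ((hsimp j).1 _ _ (hb j)).1)
  have hPP : ∀ i, PPset mul b i ⊆ I i := by
    rintro i _ ⟨x, hx, y, hy, rfl⟩
    exact ((hsimp i).1 x y (hP i hy)).1
  refine ⟨fun i x hx => ?_, fun i x hx e he => ?_⟩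
  · have hxI : x ∈ I i := Submodule.span_le.2 (hS i) hx
    exact ⟨(hsimp i).mem_idealGen_mul (hb i) hxI, fun h =>
      ((hsimp i).mem_idealGen_mul hxI (hb i) h).symm⟩
  · exact ⟨fun h => ((hsimp i).mem_idealGen_mul (hPP i hx) (hS i he) h).symm,
      (hsimp i).mem_idealGen_mul (hS i he) (hPP i hx)⟩

theorem IsSemisimple.exists_semiDivisionBasis (h : IsSemisimple mul) :
    ∃ (s : Set V) (b : Basis s K V), IsSemiDivisionBasis mul b := by
  classical
  obtain ⟨𝒮, hsimp, hind, htop⟩ := h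
  have hint : DirectSum.IsInternal fun I : 𝒮 => (I : Submodule K V) :=
    DirectSum.isInternal_submodule_of_iSupIndep_of_iSup_eq_top ((sSupIndep_iff 𝒮).1 hind)
      (by rw [← sSup_eq_iSup', htop])
  set B := hint.collectedBasis fun I => Basis.ofVectorSpace K I
  set e := Equiv.ofInjective B B.injective
  refine ⟨Set.range B, B.reindex e, isSemiDivisionBasis_of_isSimpleIdeal _ (fun v => (e.symm v).1)
    (fun v => hsimp _ (e.symm v).1.2)
    (fun v w hvw => hind.pairwiseDisjoint (e.symm v).1.2 (e.symm w).1.2 hvw)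
    (fun v => by rw [Basis.reindex_apply]; exact hint.collectedBasis_mem _ _)
    fun v w hwv x hx => ?_⟩
  rw [Basis.coord_apply, Basis.repr_reindex_apply]
  exact hint.collectedBasis_repr_of_mem_ne _ (fun h => hwv (congrArg Subtype.val h)) hx

end Forward

section Backward

variable {mul : V →ₗ[K] V →ₗ[K] V} {b : Basis ι K V} {Q : Submodule K V}

namespace IsWeakDivisionBasis

theorem basis_mem_of_mul_ne_zero (hw : IsWeakDivisionBasis mul b) (hQ : IsIdeal mul Q) {z : V}
    (hz : z ∈ Q) {r : ι} (h : mul z (b r) ≠ 0 ∨ mul (b r) z ≠ 0) : b r ∈ Q := by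
  obtain ⟨x, hx, hxr, hrx⟩ := exists_mem_span_Sset_mul_eq (mul := mul) b r z
  rcases h with h | h
  · exact idealGen_le hQ (by rw [hxr]; exact (hQ _ _ hz).2) ((hw r x hx).2 (by rwa [hxr])).1
  · exact idealGen_le hQ (by rw [hrx]; exact (hQ _ _ hz).1) ((hw r x hx).1 (by rwa [hrx])).1

theorem mul_eq_zero_of_forall_notMem (hw : IsWeakDivisionBasis mul b) (hQ : IsIdeal mul Q)
    {s : ι} (hs : b s ∈ Q) {y : V}
    (hy : ∀ n ∈ (b.repr y).support, b n ∉ Q) : mul y (b s) = 0 ∧ mul (b s) y = 0 := by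
  by_contra h
  obtain ⟨n, hn, hns⟩ := exists_mem_support_of_mul_ne_zero b (not_and_or.1 h)
  exact hy n hn (hw.basis_mem_of_mul_ne_zero hQ hs hns.symm)

theorem basis_mem_of_mem_support (hw : IsWeakDivisionBasis mul b) (hann : HasZeroAnn mul)
    (hQ : IsIdeal mul Q) {z : V} (hz : z ∈ Q) {n : ι}
    (hn : n ∈ (b.repr z).support) : b n ∈ Q := by
  classical
  obtain ⟨x, y, rfl, hx, hy⟩ := b.exists_add_support_filter z (fun n => b n ∈ Q)
  have hxQ : x ∈ Q := b.mem_of_forall_mem_support fun n hn => ((hx n).1 hn).2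
  have hyQ : y ∈ Q := by simpa using Q.sub_mem hz hxQ
  have hy' : ∀ n ∈ (b.repr y).support, b n ∉ Q := fun n hn => ((hy n).1 hn).2
  by_contra hnQ
  have hny : n ∈ (b.repr y).support := (hy n).2 ⟨hn, hnQ⟩
  have hy0 : y ≠ 0 := by rintro rfl; simp at hny
  obtain ⟨r, hr⟩ := hann.exists_basis_mul_ne_zero b hy0
  have h0 := hw.mul_eq_zero_of_forall_notMem hQ (hw.basis_mem_of_mul_ne_zero hQ hyQ hr) hy'
  exact hr.elim (· h0.1) (· h0.2)

theorem idealGen_mul_eq (hw : IsWeakDivisionBasis mul b) {i j : ι}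
    (h : mul (b i) (b j) ≠ 0) :
    idealGen mul (mul (b i) (b j)) = idealGen mul (b i) ∧
      idealGen mul (mul (b i) (b j)) = idealGen mul (b j) := by
  obtain ⟨hi, hj⟩ := (hw i (b j) (Submodule.subset_span ⟨j, rfl, Or.inl h⟩)).1 h
  exact
    ⟨idealGen_eq_of_mem_of_mem ((isIdeal_idealGen mul _ (b j) _ (mem_idealGen_self mul _)).2) hi,
      idealGen_eq_of_mem_of_mem ((isIdeal_idealGen mul _ (b i) _ (mem_idealGen_self mul _)).1) hj⟩

end IsWeakDivisionBasis

def basisClass (mul : V →ₗ[K] V →ₗ[K] V) (b : Basis ι K V) (m : ι) : Set ι :=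
  {n | idealGen mul (b n) = idealGen mul (b m)}

namespace IsSemiDivisionBasis

theorem mul_mem_of_basis_mem_support (hsd : IsSemiDivisionBasis mul b)
    (hann : HasZeroAnn mul) (hQ : IsIdeal mul Q) {k j n : ι}
    (hn : n ∈ (b.repr (mul (b k) (b j))).support) (hnQ : b n ∈ Q) : mul (b k) (b j) ∈ Q := by
  classical
  set u := mul (b k) (b j)
  have hPP : ∀ i ∈ (b.repr u).support, u ∈ PPset mul b i := fun i hi => by
    have hi' : b.coord i u ≠ 0 := Finsupp.mem_support_iff.1 hi
    exact ⟨b k, ⟨k, rfl, Or.inl ⟨j, hi'⟩⟩, b j, ⟨j, rfl, Or.inr ⟨k, hi'⟩⟩, rfl⟩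
  obtain ⟨x, y, hxy, hx, hy⟩ := b.exists_add_support_filter u (fun n => b n ∈ Q)
  have hxQ : x ∈ Q := b.mem_of_forall_mem_support fun n hn => ((hx n).1 hn).2
  have hnx : n ∈ (b.repr x).support := (hx n).2 ⟨hn, hnQ⟩
  have hx0 : x ≠ 0 := by rintro rfl; simp at hnx
  have hy' : ∀ n ∈ (b.repr y).support, b n ∉ Q := fun n hn => ((hy n).1 hn).2
  obtain ⟨s, hs⟩ := hann.exists_basis_mul_ne_zero b hx0
  have hsQ : b s ∈ Q := hsd.1.basis_mem_of_mul_ne_zero hQ hxQ hs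
  obtain ⟨i, hi, his⟩ := exists_mem_support_of_mul_ne_zero b hs
  have hiu : i ∈ (b.repr u).support := ((hx i).1 hi).1
  have hsS : b s ∈ Sset mul b i := ⟨s, rfl, his⟩
  have hy0 := hsd.1.mul_eq_zero_of_forall_notMem hQ hsQ hy'
  rcases hs with hs | hs
  · have hus : mul u (b s) ≠ 0 := by rwa [hxy, map_add, LinearMap.add_apply, hy0.1, add_zero]
    exact idealGen_le hQ (hQ _ _ hsQ).1 ((hsd.2 i u (hPP i hiu) (b s) hsS).1 hus).2
  · have hsu : mul (b s) u ≠ 0 := by rwa [hxy, map_add, hy0.2, add_zero]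
    exact idealGen_le hQ (hQ _ _ hsQ).2 ((hsd.2 i u (hPP i hiu) (b s) hsS).2 hsu).2

theorem idealGen_basis_eq_of_mem_support (hsd : IsSemiDivisionBasis mul b)
    (hann : HasZeroAnn mul) {k j n : ι} (hn : n ∈ (b.repr (mul (b k) (b j))).support) :
    idealGen mul (b n) = idealGen mul (mul (b k) (b j)) :=
  idealGen_eq_of_mem_of_mem
    (hsd.1.basis_mem_of_mem_support hann (isIdeal_idealGen mul _) (mem_idealGen_self mul _) hn)
    (hsd.mul_mem_of_basis_mem_support hann (isIdeal_idealGen mul _) hn (mem_idealGen_self mul _))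

theorem isIdeal_span_basisClass (hsd : IsSemiDivisionBasis mul b) (hann : HasZeroAnn mul) (m : ι) :
    IsIdeal mul (Submodule.span K (b '' basisClass mul b m)) := by
  have key : ∀ k p, (idealGen mul (b k) = idealGen mul (b m) ∨
      idealGen mul (b p) = idealGen mul (b m)) →
      mul (b k) (b p) ∈ Submodule.span K (b '' basisClass mul b m) := by
    intro k p hkp
    by_cases h0 : mul (b k) (b p) = 0
    · rw [h0]; exact Submodule.zero_mem _
    refine b.mem_of_forall_mem_support fun n hn => Submodule.subset_span ⟨n, ?_, rfl⟩
    obtain ⟨hk, hp⟩ := hsd.1.idealGen_mul_eq h0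
    show idealGen mul (b n) = _
    rw [hsd.idealGen_basis_eq_of_mem_support hann hn]
    rcases hkp with h | h
    · rw [hk, h]
    · rw [hp, h]
  refine isIdeal_span_of_basis b _ ?_
  rintro k _ ⟨p, hp, rfl⟩
  exact ⟨key k p (Or.inr hp), key p k (Or.inl hp)⟩

theorem idealGen_eq_span_basisClass (hsd : IsSemiDivisionBasis mul b) (hann : HasZeroAnn mul)
    (m : ι) :
    idealGen mul (b m) = Submodule.span K (b '' basisClass mul b m) := by
  refine le_antisymm (idealGen_le (hsd.isIdeal_span_basisClass hann m)
    (Submodule.subset_span ⟨m, rfl, rfl⟩)) (Submodule.span_le.2 ?_)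
  rintro _ ⟨n, hn, rfl⟩
  exact hn ▸ mem_idealGen_self mul (b n)

theorem idealGen_eq_of_basis_mem (hsd : IsSemiDivisionBasis mul b) (hann : HasZeroAnn mul)
    {m n : ι} (hn : b n ∈ idealGen mul (b m)) :
    idealGen mul (b n) = idealGen mul (b m) := by
  rw [hsd.idealGen_eq_span_basisClass hann] at hn
  exact b.self_mem_span_image.1 hn

theorem disjoint_idealGen_span_compl (hsd : IsSemiDivisionBasis mul b) (hann : HasZeroAnn mul)
    (m : ι) :
    Disjoint (idealGen mul (b m)) (Submodule.span K (b '' (basisClass mul b m)ᶜ)) := by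
  rw [hsd.idealGen_eq_span_basisClass hann]
  exact b.linearIndependent.disjoint_span_image disjoint_compl_right

theorem idealGen_le_span_compl (hsd : IsSemiDivisionBasis mul b) (hann : HasZeroAnn mul)
    {k m : ι} (hkm : idealGen mul (b k) ≠ idealGen mul (b m)) :
    idealGen mul (b k) ≤ Submodule.span K (b '' (basisClass mul b m)ᶜ) := by
  rw [hsd.idealGen_eq_span_basisClass hann]
  exact Submodule.span_mono (Set.image_mono fun n (hn : idealGen mul (b n) = _)
    (h : idealGen mul (b n) = _) => hkm (hn ▸ h))

theorem isSimpleIdeal (hsd : IsSemiDivisionBasis mul b) (hann : HasZeroAnn mul) (m : ι) :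
    IsSimpleIdeal mul (idealGen mul (b m)) := by
  have hideal := isIdeal_idealGen mul (b m)
  refine ⟨hideal, ?_, fun J hJ hJst => ?_⟩
  · obtain ⟨r, hr⟩ := hann.exists_basis_mul_ne_zero b (b.ne_zero m)
    have hrm := hsd.1.basis_mem_of_mul_ne_zero hideal (mem_idealGen_self mul _) hr
    rcases hr with hr | hr
    exacts [⟨b m, mem_idealGen_self mul _, b r, hrm, hr⟩,
      ⟨b r, hrm, b m, mem_idealGen_self mul _, hr⟩]
  -- basis vectors outside `idealGen mul (b m)` multiply `J` to zero
  have hJideal : IsIdeal mul J := by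
    refine J.span_eq ▸ isIdeal_span_of_basis b J fun k x hx => ?_
    rw [J.span_eq]
    by_cases hk : b k ∈ idealGen mul (b m)
    · exact hJst _ hk x hx
    have hkm : idealGen mul (b k) ≠ idealGen mul (b m) :=
      fun h => hk (h ▸ mem_idealGen_self mul _)
    have hd := ((hsd.disjoint_idealGen_span_compl hann m).mono_right
      (hsd.idealGen_le_span_compl hann hkm)).symm
    have hbk := mem_idealGen_self mul (b k)
    rw [mul_eq_zero_of_disjoint (isIdeal_idealGen mul _) hideal hd hbk (hJ hx),
      mul_eq_zero_of_disjoint hideal (isIdeal_idealGen mul _) hd.symm (hJ hx) hbk]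
    exact ⟨J.zero_mem, J.zero_mem⟩
  by_cases hJbot : J = ⊥
  · exact Or.inl hJbot
  obtain ⟨z, hzJ, hz0⟩ := (Submodule.ne_bot_iff J).1 hJbot
  obtain ⟨n, hn⟩ := Finsupp.support_nonempty_iff.2 (b.repr.map_ne_zero_iff.2 hz0)
  have hnJ := hsd.1.basis_mem_of_mem_support hann hJideal hzJ hn
  exact Or.inr <| le_antisymm hJ <|
    hsd.idealGen_eq_of_basis_mem hann (hJ hnJ) ▸ idealGen_le hJideal hnJ

theorem isSemisimple (hsd : IsSemiDivisionBasis mul b) (hann : HasZeroAnn mul) :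
    IsSemisimple mul := by
  refine ⟨Set.range fun m => idealGen mul (b m), ?_, ?_, ?_⟩
  · rintro _ ⟨m, rfl⟩
    exact hsd.isSimpleIdeal hann m
  · rintro _ ⟨m, rfl⟩
    refine (hsd.disjoint_idealGen_span_compl hann m).mono_right (sSup_le ?_)
    rintro _ ⟨⟨k, rfl⟩, hk⟩
    exact hsd.idealGen_le_span_compl hann hk
  · rw [eq_top_iff, ← b.span_eq, Submodule.span_le]
    rintro _ ⟨n, rfl⟩
    exact Submodule.mem_sSup_of_mem (Set.mem_range_self n) (mem_idealGen_self mul (b n))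

end IsSemiDivisionBasis

end Backward

/-- An arbitrary algebra is semisimple iff it has zero annihilator and
admits a semi-division linear basis. -/
theorem semisimple_iff_zeroAnn_and_semiDivisionBasis
    (mul : V →ₗ[K] V →ₗ[K] V) :
    IsSemisimple mul ↔
      HasZeroAnn mul ∧
        ∃ (s : Set V) (b : Module.Basis s K V), IsSemiDivisionBasis mul b := by
  refine ⟨fun h => ⟨h.hasZeroAnn, h.exists_semiDivisionBasis⟩, ?_⟩
  rintro ⟨hann, _, _, hsd⟩
  exact hsd.isSemisimple hann
end

section
/- Let K be a field, A an algebra over K (a K-vector space with a bilinear product, no identities assumed), and B a linear basis of A. If B is an i-division basis of A, then B is a semi-division basis of A. -/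
/-!  Nonassociative algebras as vector spaces with a bilinear product. -/

variable {K V : Type*} [Field K] [AddCommGroup V] [Module K V]

variable {ι : Type*}

namespace IsIDivisionBasis

variable {mul : V →ₗ[K] V →ₗ[K] V} {b : Module.Basis ι K V}

theorem isWeakDivisionBasis (h : IsIDivisionBasis mul b) : IsWeakDivisionBasis mul b :=
  fun i x _ => h i x

theorem mem_idealGen_of_mem_range (h : IsIDivisionBasis mul b) {e : V} (he : e ∈ Set.range b)
    (x : V) :
    (mul x e ≠ 0 → e ∈ idealGen mul (mul x e) ∧ x ∈ idealGen mul (mul x e)) ∧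
    (mul e x ≠ 0 → e ∈ idealGen mul (mul e x) ∧ x ∈ idealGen mul (mul e x)) := by
  obtain ⟨j, rfl⟩ := he
  exact ⟨(h j x).2, (h j x).1⟩

end IsIDivisionBasis

theorem Sset_subset_range (mul : V →ₗ[K] V →ₗ[K] V) (b : Module.Basis ι K V) (i : ι) :
    Sset mul b i ⊆ Set.range b := by
  rintro _ ⟨j, rfl, -⟩
  exact ⟨j, rfl⟩

/-- Any i-division basis is a semi-division basis. -/
theorem semiDivisionBasis_of_iDivisionBasis
    (mul : V →ₗ[K] V →ₗ[K] V) (b : Module.Basis ι K V)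
    (h : IsIDivisionBasis mul b) :
    IsSemiDivisionBasis mul b :=
  ⟨h.isWeakDivisionBasis, fun i x _ _ he =>
    h.mem_idealGen_of_mem_range (Sset_subset_range mul b i he) x⟩
end

section
/- Let A be the complex algebra with underlying vector space ℂ × ℂ, basis {e₁, e₂} where e₁ = (1,0) and e₂ = (0,1), and bilinear product determined by e₁e₁ = e₁, e₂e₂ = e₁ + e₂, and e₁e₂ = e₂e₁ = 0. Then Ann(A) = 0 and A is not semisimple; in particular, the existence of a weak-division basis together with zero annihilator does not imply semisimplicity for arbitrary algebras. -/
/-!  Nonassociative algebras as vector spaces with a bilinear product. -/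

variable {K V : Type*} [Field K] [AddCommGroup V] [Module K V]

variable {ι : Type*}

/-! The product is `(a, b)(c, d) = (ac + bd, bd)`. Multiplying by `e₁` and `e₂` recovers both
coordinates of `x`, so the annihilator vanishes. The line `ℂe₁ = ker snd` is an ideal, and any
ideal containing an element with nonzero second coordinate `b` contains `e₂(a, b) = (b, b)` and
then `e₁(b, b) = (b, 0)`, hence is everything. So the whole algebra is not simple (it contains
the ideal `ℂe₁`) and every simple ideal lies in `ℂe₁`; their sum cannot be the whole algebra. -/

section General

variable {mul : V →ₗ[K] V →ₗ[K] V}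

theorem not_isSimpleIdeal_top {L : Submodule K V} (hL : IsIdeal mul L) (hL_bot : L ≠ ⊥)
    (hL_top : L ≠ ⊤) : ¬ IsSimpleIdeal mul ⊤ := by
  rintro ⟨-, -, hmin⟩
  rcases hmin L le_top (fun a _ x hx => hL a x hx) with h | h
  exacts [hL_bot h, hL_top h]

theorem not_isSemisimple_of_forall_le {L : Submodule K V} (hL : L ≠ ⊤)
    (hle : ∀ I, IsSimpleIdeal mul I → I ≤ L) : ¬ IsSemisimple mul := by
  rintro ⟨S, hS, -, hsup⟩
  exact hL (top_unique (hsup ▸ sSup_le fun I hI => hle I (hS I hI)))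

end General

section Example

open LinearMap

variable {mul : (ℂ × ℂ) →ₗ[ℂ] (ℂ × ℂ) →ₗ[ℂ] (ℂ × ℂ)}

theorem mul_apply_of_basis (h11 : mul (1, 0) (1, 0) = (1, 0)) (h22 : mul (0, 1) (0, 1) = (1, 1))
    (h12 : mul (1, 0) (0, 1) = 0) (h21 : mul (0, 1) (1, 0) = 0) (a b c d : ℂ) :
    mul (a, b) (c, d) = (a * c + b * d, b * d) := by
  have hdecomp : ∀ x y : ℂ, ((x, y) : ℂ × ℂ) = x • (1, 0) + y • (0, 1) := fun x y => by simp
  rw [hdecomp a b, hdecomp c d]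
  simp only [map_add, map_smul, LinearMap.add_apply, LinearMap.smul_apply, h11, h22, h12, h21,
    smul_zero, add_zero, zero_add]
  ext <;> simp [mul_comm]

theorem hasZeroAnn_of_mul_apply
    (hmul : ∀ a b c d : ℂ, mul (a, b) (c, d) = (a * c + b * d, b * d)) : HasZeroAnn mul := by
  rintro ⟨a, b⟩ hx
  have ha : a = 0 := by simpa [hmul] using (hx (1, 0)).1
  have hb : b = 0 := by simpa [hmul] using (hx (0, 1)).1
  rw [ha, hb, Prod.mk_zero_zero]

theorem isIdeal_ker_snd (hmul : ∀ a b c d : ℂ, mul (a, b) (c, d) = (a * c + b * d, b * d)) :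
    IsIdeal mul (ker (snd ℂ ℂ ℂ)) := by
  rintro ⟨a, b⟩ ⟨c, d⟩ hx
  simp only [mem_ker, snd_apply] at hx
  simp [hmul, hx]

theorem eq_top_of_not_le_ker_snd
    (hmul : ∀ a b c d : ℂ, mul (a, b) (c, d) = (a * c + b * d, b * d)) {I : Submodule ℂ (ℂ × ℂ)}
    (hI : IsIdeal mul I) (hnle : ¬ I ≤ ker (snd ℂ ℂ ℂ)) : I = ⊤ := by
  obtain ⟨⟨a, b⟩, hxI, hb⟩ := SetLike.not_le_iff_exists.mp hnle
  simp only [mem_ker, snd_apply] at hb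
  have hbb : ((b, b) : ℂ × ℂ) ∈ I := by simpa [hmul] using (hI (0, 1) _ hxI).1
  have hb0 : ((b, 0) : ℂ × ℂ) ∈ I := by simpa [hmul] using (hI (1, 0) _ hbb).1
  have he₁ : ((1, 0) : ℂ × ℂ) ∈ I := by simpa [hb] using I.smul_mem b⁻¹ hb0
  have he₂ : ((0, 1) : ℂ × ℂ) ∈ I := by simpa [hb] using I.sub_mem (I.smul_mem b⁻¹ hbb) he₁
  refine eq_top_iff.mpr fun ⟨c, d⟩ _ => ?_
  simpa using I.add_mem (I.smul_mem c he₁) (I.smul_mem d he₂)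

theorem ker_snd_ne_bot : ker (snd ℂ ℂ ℂ) ≠ ⊥ :=
  (Submodule.ne_bot_iff _).mpr ⟨(1, 0), by simp, by simp⟩

theorem ker_snd_ne_top : ker (snd ℂ ℂ ℂ) ≠ ⊤ := fun h => by
  simpa using h.ge (Submodule.mem_top (x := ((0, 1) : ℂ × ℂ)))

theorem le_ker_snd_of_isSimpleIdeal
    (hmul : ∀ a b c d : ℂ, mul (a, b) (c, d) = (a * c + b * d, b * d)) {I : Submodule ℂ (ℂ × ℂ)}
    (hI : IsSimpleIdeal mul I) : I ≤ ker (snd ℂ ℂ ℂ) := by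
  by_contra hnle
  rw [eq_top_of_not_le_ker_snd hmul hI.1 hnle] at hI
  exact not_isSimpleIdeal_top (isIdeal_ker_snd hmul) ker_snd_ne_bot ker_snd_ne_top hI

end Example

/-- The complex algebra `A = ℂ × ℂ` whose bilinear product is determined on the
basis `e₁ = (1,0)`, `e₂ = (0,1)` by `e₁e₁ = e₁`, `e₂e₂ = e₁ + e₂`, `e₁e₂ = e₂e₁ = 0`
has zero annihilator and is not semisimple. -/
theorem example_zeroAnn_not_semisimple
    (mul : (ℂ × ℂ) →ₗ[ℂ] (ℂ × ℂ) →ₗ[ℂ] (ℂ × ℂ))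
    (h11 : mul (1, 0) (1, 0) = (1, 0))
    (h22 : mul (0, 1) (0, 1) = (1, 1))
    (h12 : mul (1, 0) (0, 1) = 0)
    (h21 : mul (0, 1) (1, 0) = 0) :
    HasZeroAnn mul ∧ ¬ IsSemisimple mul := by
  have hmul := mul_apply_of_basis h11 h22 h12 h21
  exact ⟨hasZeroAnn_of_mul_apply hmul,
    not_isSemisimple_of_forall_le ker_snd_ne_top fun _ => le_ker_snd_of_isSimpleIdeal hmul⟩
end

section
/- Let K be a field, A an algebra over K (a K-vector space with a bilinear product, no identities assumed), and {V_t}_{t∈T} a family of linear subspaces of A such that A is the internal direct sum ⊕_{t∈T} V_t and V_s V_t = 0 whenever s ≠ t; let Π_t : A → V_t denote the projection onto V_t determined by this decomposition. Define V_s ≡ V_t if and only if either V_s = V_t or there exists a finite sequence (V_{t_1}, …, V_{t_n}) with n ≥ 2, V_{t_1} = V_s, V_{t_n} = V_t, and Π_{t_k}(V_{t_{k+1}} V_{t_{k+1}}) + Π_{t_{k+1}}(V_{t_k} V_{t_k}) ≠ 0 for every k ∈ {1, …, n−1}. Then for each ≡-equivalence class, the sum of the subspaces in that class is an ideal of A.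 -/
variable {K V : Type*} [Field K] [AddCommGroup V] [Module K V]

/-- The product `U·W` of two subspaces: the linear span of `{u·w : u ∈ U, w ∈ W}`. -/
def subMul (mul : V →ₗ[K] V →ₗ[K] V) (U W : Submodule K V) : Submodule K V :=
  Submodule.span K {z | ∃ u ∈ U, ∃ w ∈ W, z = mul u w}

variable {T : Type*}

/-- The linking condition between two members `V_s`, `V_t` of the family:
`Π_s(V_t V_t) + Π_t(V_s V_s) ≠ 0`. -/
def LinkCond (mul : V →ₗ[K] V →ₗ[K] V) (Vf : T → Submodule K V)
    (π : T → (V →ₗ[K] V)) (s t : T) : Prop :=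
  Submodule.map (π s) (subMul mul (Vf t) (Vf t)) ⊔
    Submodule.map (π t) (subMul mul (Vf s) (Vf s)) ≠ ⊥

/-- The relation `≡` on the family `{V_t}`: either `V_s = V_t`, or there is a finite
sequence `(V_{t_1}, …, V_{t_n})`, `n ≥ 2`, with `V_{t_1} = V_s`, `V_{t_n} = V_t`, and
`Π_{t_k}(V_{t_{k+1}} V_{t_{k+1}}) + Π_{t_{k+1}}(V_{t_k} V_{t_k}) ≠ 0` for all
`k ∈ {1, …, n-1}` (here indexed from `0` to `n-1`). -/
def DirSumRel (mul : V →ₗ[K] V →ₗ[K] V) (Vf : T → Submodule K V)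
    (π : T → (V →ₗ[K] V)) (s t : T) : Prop :=
  Vf s = Vf t ∨
    ∃ n : ℕ, 2 ≤ n ∧ ∃ f : ℕ → T,
      Vf (f 0) = Vf s ∧ Vf (f (n - 1)) = Vf t ∧
      ∀ k : ℕ, k + 1 < n → LinkCond mul Vf π (f k) (f (k + 1))

/-- Auxiliary: `subMul` with a bottom factor is bottom. -/
lemma subMul_bot_bot (mul : V →ₗ[K] V →ₗ[K] V) :
    subMul mul (⊥ : Submodule K V) (⊥ : Submodule K V) = ⊥ := by
  rw [subMul, Submodule.span_eq_bot]
  rintro z ⟨u, hu, w, hw, rfl⟩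
  rw [Submodule.mem_bot] at hu
  simp [hu]

/-- Auxiliary: decomposition of any element via the projections. -/
lemma decomp_exists (Vf : T → Submodule K V) (hsup : iSup Vf = ⊤)
    (π : T → (V →ₗ[K] V))
    (hπid : ∀ t : T, ∀ x ∈ Vf t, π t x = x)
    (hπzero : ∀ s t : T, s ≠ t → ∀ x ∈ Vf t, π s x = 0) (a : V) :
    ∃ F : Finset T, a = ∑ u ∈ F, π u a := by
  classical
  have ha : a ∈ iSup Vf := by rw [hsup]; trivial
  rw [Submodule.mem_iSup_iff_exists_finsupp] at ha
  obtain ⟨f, hf, hsum⟩ := ha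
  refine ⟨f.support, ?_⟩
  have key : ∀ u, π u a = f u := by
    intro u
    have : π u a = ∑ i ∈ f.support, π u (f i) := by
      rw [← hsum, Finsupp.sum, map_sum]
    rw [this, Finset.sum_eq_single u]
    · by_cases hu : f u = 0
      · simp [hu]
      · exact hπid u (f u) (hf u)
    · intro b _ hbu
      exact hπzero u b (fun h => hbu h.symm) (f b) (hf b)
    · intro hu
      rw [Finsupp.notMem_support_iff] at hu
      simp [hu]
  calc a = f.sum fun _ xi => xi := hsum.symm
    _ = ∑ u ∈ f.support, f u := rfl
    _ = ∑ u ∈ f.support, π u a := by simp [key]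

/-- Auxiliary: `LinkCond` only depends on the subspaces. -/
lemma linkCond_congr (mul : V →ₗ[K] V →ₗ[K] V) (Vf : T → Submodule K V)
    (π : T → (V →ₗ[K] V))
    (hπmem : ∀ (t : T) (x : V), π t x ∈ Vf t)
    (hπid : ∀ t : T, ∀ x ∈ Vf t, π t x = x)
    (hπzero : ∀ s t : T, s ≠ t → ∀ x ∈ Vf t, π s x = 0)
    {a b w : T} (hab : Vf a = Vf b)
    (h : LinkCond mul Vf π a w) : LinkCond mul Vf π b w := by
  by_cases hEq : a = b
  · exact hEq ▸ h
  · exfalso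
    have hbot : Vf a = ⊥ := by
      rw [eq_bot_iff]
      intro x hx
      have h1 : π b x = 0 := hπzero b a (fun h' => hEq h'.symm) x hx
      have h2 : π b x = x := hπid b x (hab ▸ hx)
      rw [Submodule.mem_bot, ← h2, h1]
    have hπa : π a = 0 := by
      ext y
      have := hπmem a y
      rw [hbot, Submodule.mem_bot] at this
      simpa using this
    apply h
    rw [hπa, Submodule.map_zero, hbot, subMul_bot_bot, Submodule.map_bot, sup_idem]

/-- Auxiliary: extending a chain by one link. -/
lemma dirSumRel_trans_link (mul : V →ₗ[K] V →ₗ[K] V) (Vf : T → Submodule K V)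
    (π : T → (V →ₗ[K] V))
    (hπmem : ∀ (t : T) (x : V), π t x ∈ Vf t)
    (hπid : ∀ t : T, ∀ x ∈ Vf t, π t x = x)
    (hπzero : ∀ s t : T, s ≠ t → ∀ x ∈ Vf t, π s x = 0)
    {s t w : T} (hst : DirSumRel mul Vf π s t) (hlink : LinkCond mul Vf π t w) :
    DirSumRel mul Vf π s w := by
  classical
  rcases hst with hEq | ⟨n, hn, f, h0, h1, hl⟩
  · right
    refine ⟨2, le_refl 2, fun k => if k = 0 then s else w, by simp, by simp, ?_⟩
    intro k hk
    have : k = 0 := by omega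
    subst this
    simpa using linkCond_congr mul Vf π hπmem hπid hπzero (hEq.symm) hlink
  · right
    refine ⟨n + 1, by omega, fun k => if k < n then f k else w, ?_, ?_, ?_⟩
    · simp only [show (0 : ℕ) < n by omega, if_true]; exact h0
    · simp
    · intro k hk
      by_cases hkn : k + 1 < n
      · simp only [show k < n by omega, hkn, if_true]
        exact hl k hkn
      · have hkeq : k + 1 = n := by omega
        have hk' : k = n - 1 := by omega
        simp only [show k < n by omega, if_true, show ¬ (k + 1 < n) by omega, if_false]
        rw [hk']
        exact linkCond_congr mul Vf π hπmem hπid hπzero h1.symm hlink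

/-- If `A` is the internal direct sum of subspaces `{V_t}` with `V_s V_t = 0` for
`s ≠ t`, and `π t` are the projections determined by the decomposition, then for
each `≡`-equivalence class the sum of the subspaces in that class is an ideal. -/
theorem dirSumRel_class_sum_isIdeal
    (mul : V →ₗ[K] V →ₗ[K] V) (Vf : T → Submodule K V)
    (hind : iSupIndep Vf) (hsup : iSup Vf = ⊤)
    (horth : ∀ s t : T, s ≠ t → subMul mul (Vf s) (Vf t) = ⊥)
    (π : T → (V →ₗ[K] V))
    (hπmem : ∀ (t : T) (x : V), π t x ∈ Vf t)
    (hπid : ∀ t : T, ∀ x ∈ Vf t, π t x = x)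
    (hπzero : ∀ s t : T, s ≠ t → ∀ x ∈ Vf t, π s x = 0) :
    ∀ s : T, IsIdeal mul (⨆ t ∈ {t : T | DirSumRel mul Vf π s t}, Vf t) := by
  classical
  intro s
  set J : Submodule K V := ⨆ t ∈ {t : T | DirSumRel mul Vf π s t}, Vf t with hJ
  -- key: products inside a class member land in J
  have hsubmul : ∀ t : T, DirSumRel mul Vf π s t →
      ∀ z ∈ subMul mul (Vf t) (Vf t), z ∈ J := by
    intro t ht z hz
    obtain ⟨F, hF⟩ := decomp_exists Vf hsup π hπid hπzero z
    rw [hF]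
    refine Submodule.sum_mem _ fun w _ => ?_
    by_cases hw : π w z = 0
    · rw [hw]; exact Submodule.zero_mem _
    · have hlink : LinkCond mul Vf π t w := by
        intro hbot
        have hmem : π w z ∈ Submodule.map (π w) (subMul mul (Vf t) (Vf t)) :=
          ⟨z, hz, rfl⟩
        have : π w z ∈ (⊥ : Submodule K V) := hbot ▸ (le_sup_right (α := Submodule K V) hmem)
        exact hw (by simpa using this)
      have hsw : DirSumRel mul Vf π s w :=
        dirSumRel_trans_link mul Vf π hπmem hπid hπzero ht hlink
      exact Submodule.mem_iSup_of_mem w (Submodule.mem_iSup_of_mem hsw (hπmem w z))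
  intro a x hx
  have hle : J ≤ Submodule.comap (mul a) J ⊓ Submodule.comap (mul.flip a) J := by
    refine iSup₂_le fun t ht => fun y hy => ?_
    rw [Submodule.mem_inf]
    obtain ⟨F, hF⟩ := decomp_exists Vf hsup π hπid hπzero a
    constructor
    · -- mul a y ∈ J
      rw [Submodule.mem_comap, hF, map_sum, LinearMap.sum_apply]
      refine Submodule.sum_mem _ fun u _ => ?_
      by_cases hut : u = t
      · subst hut
        exact hsubmul u ht _ (Submodule.subset_span ⟨π u a, hπmem u a, y, hy, rfl⟩)
      · have : mul (π u a) y ∈ subMul mul (Vf u) (Vf t) :=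
          Submodule.subset_span ⟨π u a, hπmem u a, y, hy, rfl⟩
        rw [horth u t hut, Submodule.mem_bot] at this
        rw [this]; exact Submodule.zero_mem _
    · -- mul y a ∈ J
      rw [Submodule.mem_comap]
      have : mul.flip a y = mul y a := rfl
      rw [this, hF, map_sum]
      refine Submodule.sum_mem _ fun u _ => ?_
      by_cases hut : u = t
      · subst hut
        exact hsubmul u ht _ (Submodule.subset_span ⟨y, hy, π u a, hπmem u a, rfl⟩)
      · have : mul y (π u a) ∈ subMul mul (Vf t) (Vf u) :=
          Submodule.subset_span ⟨y, hy, π u a, hπmem u a, rfl⟩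
        rw [horth t u (fun h => hut h.symm), Submodule.mem_bot] at this
        rw [this]; exact Submodule.zero_mem _
  have := hle hx
  rw [Submodule.mem_inf] at this
  exact this
end
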